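/- For every integer n ≥ 2, if ω = exp(2πi/6) is a primitive sixth root of unity, then 2·Re(Li_n(ω)) = (3^{1-n} - 1)·(2^{1-n} - 1)·ζ(n). -/

import Mathlib

/-!
For `ω = e^{iπ/3}` one has `2 Re ω^k = 2 cos (kπ/3) = (1 - 2·[2 ∣ k]) (1 - 3·[3 ∣ k])`, so
`2 Re Li_n(ω)` is the Dirichlet series `∑ (1 - 2·[2 ∣ k]) (1 - 3·[3 ∣ k]) / k^n`. Multiplying the
coefficients `w k` of `∑ w k / k^n` by `1 - p·[p ∣ k]`, where `w (p k) = w k`, multiplies the sum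
by `1 - p^{1-n}`, since the multiples of `p` contribute `p^{-n}` times the whole series. Doing this
for `p = 3` and then `p = 2`, starting from `ζ(n)`, gives the claim.
-/

/-- The classical polylogarithm `Li n z = ∑_{k ≥ 1} z^k / k^n`. -/
noncomputable def Li (n : ℕ) (z : ℂ) : ℂ := ∑' k : ℕ, z ^ (k + 1) / ((k : ℂ) + 1) ^ n

open Real Complex

lemma two_mul_cos_nat_mul_pi_div_three (k : ℕ) :
    2 * Real.cos (k * (π / 3)) =
      (1 - if 2 ∣ k then 2 else 0) * (1 - if 3 ∣ k then 3 else 0) := by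
  induction k using Nat.strong_induction_on with
  | _ k ih =>
    match k, ih with
    | 0, _ => norm_num
    | 1, _ => norm_num [Real.cos_pi_div_three]
    | 2, _ => norm_num [Real.cos_two_mul, Real.cos_pi_div_three]
    | k + 3, ih =>
      -- both sides change sign under `k ↦ k + 3`
      have h2 : 2 ∣ k + 3 ↔ ¬ 2 ∣ k := by omega
      have h3 : 3 ∣ k + 3 ↔ 3 ∣ k := by omega
      have hangle : ((k + 3 : ℕ) : ℝ) * (π / 3) = k * (π / 3) + π := by push_cast; ring
      rw [hangle, Real.cos_add_pi, mul_neg, ih k (by omega)]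
      simp only [h2, h3]
      by_cases hk : 2 ∣ k <;> simp [hk] <;> ring

lemma HasSum.one_sub_ite_dvd_mul {w : ℕ → ℝ} {n m : ℕ} {S : ℝ} (hm : m ≠ 0)
    (hw : ∀ k, w (m * k) = w k) (h : HasSum (fun k : ℕ => w k / (k : ℝ) ^ n) S) :
    HasSum (fun k : ℕ => (1 - if m ∣ k then (m : ℝ) else 0) * w k / (k : ℝ) ^ n)
      ((1 - (m : ℝ) ^ ((1 : ℤ) - n)) * S) := by
  have hdvd : HasSum ({k | m ∣ k}.indicator fun k : ℕ => w k / (k : ℝ) ^ n) (S / m ^ n) := by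
    rw [← (mul_right_injective₀ hm).hasSum_iff fun k hk =>
      Set.indicator_of_notMem (by rintro ⟨j, rfl⟩; exact hk ⟨j, rfl⟩) _]
    refine (h.div_const ((m : ℝ) ^ n)).congr_fun fun k => ?_
    rw [Function.comp_apply, Set.indicator_of_mem (s := {k | m ∣ k}) (dvd_mul_right m k), hw,
      Nat.cast_mul, mul_pow, div_div, mul_comm ((k : ℝ) ^ n)]
  have hm' : (m : ℝ) ≠ 0 := Nat.cast_ne_zero.mpr hm
  rw [show (1 - (m : ℝ) ^ ((1 : ℤ) - n)) * S = S - m * (S / m ^ n) by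
    rw [zpow_sub₀ hm', zpow_one, zpow_natCast]; ring]
  refine (h.sub (hdvd.mul_left (m : ℝ))).congr_fun fun k => ?_
  by_cases hk : m ∣ k
  · simp [hk]
    ring
  · simp [hk]

lemma hasSum_Li {n : ℕ} (hn : 1 < n) {z : ℂ} (hz : ‖z‖ ≤ 1) :
    HasSum (fun k : ℕ => z ^ k / (k : ℂ) ^ n) (Li n z) := by
  have hs : Summable fun k : ℕ => z ^ k / (k : ℂ) ^ n := by
    refine Summable.of_norm_bounded (Real.summable_one_div_nat_pow.mpr hn) fun k => ?_
    rw [norm_div, norm_pow, norm_pow, Complex.norm_natCast]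
    gcongr
    exact pow_le_one₀ (norm_nonneg _) hz
  convert hs.hasSum using 1
  -- the extra `k = 0` term is `1 / 0 = 0`
  rw [hs.tsum_eq_zero_add, Li]
  simp [zero_pow (by omega : n ≠ 0)]

lemma hasSum_re_Li_exp_mul_I {n : ℕ} (hn : 1 < n) (θ : ℝ) :
    HasSum (fun k : ℕ => Real.cos (k * θ) / (k : ℝ) ^ n) (Li n (exp (θ * I))).re := by
  convert Complex.hasSum_re (hasSum_Li hn (z := exp (θ * I)) (by simp)) using 1
  ext k
  rw [← Nat.cast_pow (α := ℂ), Complex.div_natCast_re, ← Complex.exp_nat_mul, ← mul_assoc,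
    ← ofReal_natCast, ← ofReal_mul, Complex.exp_ofReal_mul_I_re]
  push_cast; rfl

lemma hasSum_one_div_nat_pow_riemannZeta_re {n : ℕ} (hn : 1 < n) :
    HasSum (fun k : ℕ => 1 / (k : ℝ) ^ n) (riemannZeta n).re := by
  have h := Real.summable_one_div_nat_pow.mpr hn
  rw [zeta_nat_eq_tsum_of_gt_one hn]
  convert h.hasSum
  rw [← ofReal_re (∑' k : ℕ, 1 / (k : ℝ) ^ n), ofReal_tsum]
  push_cast; rfl

theorem re_polylog_sixth_root (n : ℕ) (hn : 2 ≤ n)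
    (ω : ℂ) (hω : ω = Complex.exp (2 * Real.pi * Complex.I / 6)) :
    2 * (Li n ω).re = ((3 : ℝ) ^ ((1 : ℤ) - n) - 1) * ((2 : ℝ) ^ ((1 : ℤ) - n) - 1) * (riemannZeta n).re := by
  have hω' : ω = exp ((π / 3 : ℝ) * I) := by rw [hω]; congr 1; push_cast; ring
  have h3 := (hasSum_one_div_nat_pow_riemannZeta_re hn).one_sub_ite_dvd_mul
    (w := fun _ => 1) three_ne_zero fun _ => rfl
  have h23 := h3.one_sub_ite_dvd_mul two_ne_zero fun k => by
    simp [Nat.Coprime.dvd_mul_left (by norm_num : Nat.Coprime 3 2)]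
  have hLi := (hasSum_re_Li_exp_mul_I hn (π / 3)).mul_left 2
  rw [hω', hLi.unique (h23.congr_fun fun k => ?_)]
  · push_cast
    ring
  · rw [← mul_div_assoc, two_mul_cos_nat_mul_pi_div_three]
    push_cast; ring
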